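/- Fix μ > 0, integers m ≥ 1, α ≥ 2, and 0 ≤ p < 1 with (1−p)^{α−1} ≥ m/(mα−α+1). Then ∑_{φ=α}^{mα} [μα/(H_φ−H_{φ−α})]·C(mα,φ)(1−p)^φ p^{mα−φ} ≥ μ(mα−α+1)(1−p)^α ≥ μm(1−p). That is, if p ≤ 1 − (m/(mα−α+1))^{1/(α−1)} for some α ≥ 2, the minimal spreading allocation does not maximize the service rate under the probabilistic access model with scaled exponential service. -/

import Mathlib

/-!
Each of the `α` terms of `H φ - H (φ - α)` is at most `1 / (φ - α + 1)`, so the coefficient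
`μ α / (H φ - H (φ - α))` is at least `μ (φ - α + 1)`. After also shrinking `C(mα, φ)` to
`C(mα - α + 1, φ - α + 1)`, the sum becomes `μ (1 - p)^α` times the mean of the binomial law
`Bin(mα - α + 1, 1 - p)`, which is `mα - α + 1`. The second inequality is the hypothesis on
`(1 - p)^(α - 1)` multiplied by `μ (1 - p)`.
-/

open Finset
noncomputable def H (n : ℕ) : ℝ := ∑ i ∈ Finset.Icc 1 n, (1 : ℝ) / i

lemma H_sub_H_eq_sum_Ioc {k n : ℕ} (hkn : k ≤ n) :
    H n - H k = ∑ i ∈ Ioc k n, (1 : ℝ) / i := by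
  have hsplit := sum_Ioc_consecutive (fun i : ℕ => (1 : ℝ) / i) (Nat.zero_le k) hkn
  unfold H
  rw [← zero_add 1, Icc_add_one_left_eq_Ioc, Icc_add_one_left_eq_Ioc, ← hsplit]
  ring

lemma H_sub_H_sub_pos {k n : ℕ} (hk : 0 < k) (hkn : k ≤ n) : 0 < H n - H (n - k) := by
  rw [H_sub_H_eq_sum_Ioc (Nat.sub_le n k)]
  refine sum_pos (fun i hi => ?_) (nonempty_Ioc.mpr (by omega))
  have : 0 < i := by simp only [mem_Ioc] at hi; omega
  positivity

lemma H_sub_H_sub_le {k n : ℕ} (hkn : k ≤ n) :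
    H n - H (n - k) ≤ k * (1 / (((n - k : ℕ) : ℝ) + 1)) := by
  rw [H_sub_H_eq_sum_Ioc (Nat.sub_le n k)]
  have hcard : #(Ioc (n - k) n) = k := by rw [Nat.card_Ioc]; omega
  calc ∑ i ∈ Ioc (n - k) n, (1 : ℝ) / i
      ≤ #(Ioc (n - k) n) • (1 / (((n - k : ℕ) : ℝ) + 1)) :=
        sum_le_card_nsmul _ _ _ fun i hi =>
          one_div_le_one_div_of_le (by positivity) (by exact_mod_cast (mem_Ioc.mp hi).1)
    _ = k * (1 / (((n - k : ℕ) : ℝ) + 1)) := by rw [hcard, nsmul_eq_mul]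

lemma sub_add_one_le_div_H_sub_H_sub {k n : ℕ} (hk : 0 < k) (hkn : k ≤ n) :
    ((n - k : ℕ) : ℝ) + 1 ≤ k / (H n - H (n - k)) := by
  rw [le_div_iff₀ (H_sub_H_sub_pos hk hkn)]
  calc (((n - k : ℕ) : ℝ) + 1) * (H n - H (n - k))
      ≤ (((n - k : ℕ) : ℝ) + 1) * (k * (1 / (((n - k : ℕ) : ℝ) + 1))) := by
        gcongr; exact H_sub_H_sub_le hkn
    _ = k := by field_simp

lemma Nat.choose_sub_sub_le_choose {n k j : ℕ} (hjk : j ≤ k) (hkn : k ≤ n) :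
    (n - j).choose (k - j) ≤ n.choose k := by
  calc (n - j).choose (k - j) = (n - j).choose (n - k) := by
        rw [← Nat.choose_symm (by omega : k - j ≤ n - j)]; congr 1; omega
    _ ≤ n.choose (n - k) := Nat.choose_le_choose _ (Nat.sub_le n j)
    _ = n.choose k := Nat.choose_symm hkn

lemma sum_range_succ_mul_choose_succ_mul_pow {R : Type*} [CommSemiring R] (x y : R) (n : ℕ) :
    ∑ j ∈ range (n + 1), ((j : R) + 1) * ((n + 1).choose (j + 1) : R) * x ^ j * y ^ (n - j) =
      (n + 1) * (x + y) ^ n := by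
  rw [add_pow, mul_sum]
  refine sum_congr rfl fun j _ => ?_
  have hchoose : ((j : R) + 1) * ((n + 1).choose (j + 1) : R) = (n + 1) * (n.choose j : R) := by
    have h := congrArg (Nat.cast (R := R)) (Nat.add_one_mul_choose_eq n j)
    push_cast at h
    rw [mul_comm, h]
  rw [hchoose]
  ring

lemma sum_Icc_shifted_binomial_mean {R : Type*} [CommSemiring R] (x y : R) {a M : ℕ}
    (haM : a ≤ M) :
    ∑ φ ∈ Icc a M, (((φ - a : ℕ) : R) + 1) * ((M - a + 1).choose (φ - a + 1) : R) *
        x ^ φ * y ^ (M - φ) = ((M - a : ℕ) + 1) * x ^ a * (x + y) ^ (M - a) := by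
  rw [← Ico_add_one_right_eq_Icc, sum_Ico_eq_sum_range, show M + 1 - a = M - a + 1 by omega,
    mul_right_comm, ← sum_range_succ_mul_choose_succ_mul_pow, sum_mul]
  refine sum_congr rfl fun j hj => ?_
  rw [mem_range] at hj
  rw [show a + j - a = j by omega, show M - (a + j) = M - a - j by omega, pow_add]
  ring

lemma mul_sub_add_one_mul_choose_le_div_H_sub_H_sub_mul_choose {μ : ℝ} (hμ : 0 ≤ μ)
    {a M φ : ℕ} (ha : 0 < a) (haφ : a ≤ φ) (hφM : φ ≤ M) :
    μ * (((φ - a : ℕ) : ℝ) + 1) * ((M - a + 1).choose (φ - a + 1) : ℝ) ≤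
      μ * a / (H φ - H (φ - a)) * M.choose φ := by
  have hcoef := sub_add_one_le_div_H_sub_H_sub ha haφ
  have hchoose : ((M - a + 1).choose (φ - a + 1) : ℝ) ≤ M.choose φ := by
    have h := Nat.choose_sub_sub_le_choose (j := a - 1) (by omega : a - 1 ≤ φ) hφM
    rw [show M - (a - 1) = M - a + 1 by omega, show φ - (a - 1) = φ - a + 1 by omega] at h
    exact_mod_cast h
  have : 0 ≤ (a : ℝ) / (H φ - H (φ - a)) := (by positivity : (0 : ℝ) ≤ _).trans hcoef
  rw [mul_div_assoc]
  gcongr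

theorem stmt15 (μ p : ℝ) (hμ : 0 < μ) (hp0 : 0 ≤ p) (hp1 : p < 1)
    (m α : ℕ) (hm : 1 ≤ m) (hα : 2 ≤ α)
    (hcond : (1 - p) ^ (α - 1) ≥ (m : ℝ) / ((m : ℝ) * α - α + 1)) :
    μ * ((m : ℝ) * α - α + 1) * (1 - p) ^ α ≤
      ∑ φ ∈ Finset.Icc α (m * α),
        (μ * α / (H φ - H (φ - α))) * ((m * α).choose φ) * (1 - p) ^ φ * p ^ (m * α - φ) ∧
    μ * m * (1 - p) ≤ μ * ((m : ℝ) * α - α + 1) * (1 - p) ^ α := by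
  have hq : 0 ≤ 1 - p := by linarith
  have hαM : α ≤ m * α := Nat.le_mul_of_pos_left α hm
  have hK : (((m * α - α : ℕ) : ℝ) + 1) = (m : ℝ) * α - α + 1 := by
    push_cast [Nat.cast_sub hαM]; ring
  have hmean := sum_Icc_shifted_binomial_mean (1 - p) p hαM
  rw [sub_add_cancel, one_pow, mul_one, hK] at hmean
  constructor
  · calc μ * ((m : ℝ) * α - α + 1) * (1 - p) ^ α
        = ∑ φ ∈ Icc α (m * α), μ * (((φ - α : ℕ) : ℝ) + 1) *
            ((m * α - α + 1).choose (φ - α + 1) : ℝ) * (1 - p) ^ φ * p ^ (m * α - φ) := by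
          rw [mul_assoc, ← hmean, mul_sum]; simp only [mul_assoc]
      _ ≤ _ := by
          gcongr ∑ φ ∈ _, ?_ * _ * _ with φ hφ
          exact mul_sub_add_one_mul_choose_le_div_H_sub_H_sub_mul_choose hμ.le (by omega)
            (mem_Icc.mp hφ).1 (mem_Icc.mp hφ).2
  · have hKpos : 0 < (m : ℝ) * α - α + 1 := by rw [← hK]; positivity
    calc μ * m * (1 - p) ≤ μ * (((m : ℝ) * α - α + 1) * (1 - p) ^ (α - 1)) * (1 - p) := by
          gcongr; linarith [(div_le_iff₀ hKpos).mp hcond]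
      _ = μ * ((m : ℝ) * α - α + 1) * (1 - p) ^ α := by
          rw [← pow_sub_one_mul (by omega : α ≠ 0)]; ring
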